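/- arXiv:2410.11483 — 2 statements merged into one kernel-verified Lean document; each statement's English description precedes it below -/
import Mathlib

section
/- Let t0 > 0, let α < 0 and β be real numbers with 2β < 1 + α, and set γ(t) = t^{−β} and S(t) = t^{α}. Then there exist constants H6 and H7, depending only on t0, Λ1, Λ2, α, β, such that for every coefficient c in the class PS(t0,Λ1,Λ2,S,γ) with stabilization constant c∞, every λ > 0, and every solution u of u''(t) + λ² c(t) u(t) = 0 on [t0,∞), the Kowaleskian energy E(t) = u'(t)²/√c∞ + λ²√c∞·u(t)² satisfies E(t) ≤ E(t0)·H6·exp( H7·t^{(α+1)/2 − β} ) for all t ≥ t0. -/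
/-!
Two energies are played against each other. The Kowaleskian energy `E`, built on `c∞`, satisfies
`|E'| ≤ λ |c - c∞| E / √c∞`, so after any time `s` it grows at most by the factor
`exp (λ S(s) / √Λ1)`. The hyperbolic energy `u'²/√c + λ²√c u² + c'/(2c√c) u u'` has derivative
`ρ u u'` with `|ρ| ≲ γ²`; as long as `λ ≳ γ` it is comparable to `E` and grows at most like
`exp (C t^(1-2β) / λ)`. Switching from the second estimate to the first at the time `s` with
`s^((1-2β-α)/2) = λ` turns both exponents into multiples of `s^((α+1)/2-β)`; small `λ` only need
the Kowaleskian estimate.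
-/

open Real Set Filter MeasureTheory

/-- The Kowaleskian energy `E(t) = u'(t)²/√c∞ + λ²·√c∞·u(t)²`. -/
noncomputable def kowE (cinf lam : ℝ) (u u' : ℝ → ℝ) (t : ℝ) : ℝ :=
  (u' t) ^ 2 / Real.sqrt cinf + lam ^ 2 * Real.sqrt cinf * (u t) ^ 2

theorem le_mul_exp_sub_of_hasDerivAt_le_mul {f f' φ Φ : ℝ → ℝ} {a b : ℝ} (hab : a ≤ b)
    (hf : ContinuousOn f (Icc a b)) (hΦ : ContinuousOn Φ (Icc a b))
    (hf' : ∀ x ∈ Ioo a b, HasDerivAt f (f' x) x) (hΦ' : ∀ x ∈ Ioo a b, HasDerivAt Φ (φ x) x)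
    (hle : ∀ x ∈ Ioo a b, f' x ≤ φ x * f x) :
    f b ≤ f a * exp (Φ b - Φ a) := by
  have hanti : AntitoneOn (fun x => f x * exp (-Φ x)) (Icc a b) := by
    refine antitoneOn_of_hasDerivWithinAt_nonpos (convex_Icc a b)
      (hf.mul (continuous_exp.comp_continuousOn hΦ.neg))
      (f' := fun x => f' x * exp (-Φ x) + f x * (exp (-Φ x) * -φ x)) ?_ ?_
    · rw [interior_Icc]
      exact fun x hx => ((hf' x hx).mul (hΦ' x hx).neg.exp).hasDerivWithinAt
    · rw [interior_Icc]
      intro x hx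
      nlinarith [hle x hx, exp_pos (-Φ x)]
  have h := hanti (left_mem_Icc.mpr hab) (right_mem_Icc.mpr hab) hab
  calc f b = f b * exp (-Φ b) * exp (Φ b) := by rw [mul_assoc, ← exp_add]; simp
    _ ≤ f a * exp (-Φ a) * exp (Φ b) := mul_le_mul_of_nonneg_right h (exp_pos _).le
    _ = f a * exp (Φ b - Φ a) := by rw [mul_assoc, ← exp_add, neg_add_eq_sub]

/-- `kowE cinf lam u u' t` is definitionally `weightedEnergy (√cinf) lam (u t) (u' t)`. -/
noncomputable def weightedEnergy (p l a b : ℝ) : ℝ := b ^ 2 / p + l ^ 2 * p * a ^ 2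

theorem weightedEnergy_nonneg {p : ℝ} (hp : 0 < p) (l a b : ℝ) : 0 ≤ weightedEnergy p l a b := by
  unfold weightedEnergy; positivity

theorem kowE_nonneg {cinf : ℝ} (hcinf : 0 < cinf) (lam : ℝ) (u u' : ℝ → ℝ) (t : ℝ) :
    0 ≤ kowE cinf lam u u' t :=
  weightedEnergy_nonneg (sqrt_pos.mpr hcinf) _ _ _

theorem two_mul_abs_mul_le_weightedEnergy {p : ℝ} (hp : 0 < p) (l a b : ℝ) :
    2 * l * |a * b| ≤ weightedEnergy p l a b := by
  have key : 2 * l * |a * b| * p ≤ b ^ 2 + l ^ 2 * p ^ 2 * a ^ 2 := by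
    rw [abs_mul, ← sq_abs a, ← sq_abs b]
    nlinarith [sq_nonneg (l * p * |a| - |b|)]
  rw [weightedEnergy]
  calc 2 * l * |a * b| ≤ (b ^ 2 + l ^ 2 * p ^ 2 * a ^ 2) / p := (le_div_iff₀ hp).mpr key
    _ = b ^ 2 / p + l ^ 2 * p * a ^ 2 := by field_simp

theorem abs_mul_mul_le_weightedEnergy {p l r : ℝ} (hp : 0 < p) (hr : |r| ≤ l) (a b : ℝ) :
    |r * (a * b)| ≤ weightedEnergy p l a b / 2 := by
  have := two_mul_abs_mul_le_weightedEnergy hp l a b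
  rw [abs_mul]
  nlinarith [mul_le_mul_of_nonneg_right hr (abs_nonneg (a * b))]

theorem weightedEnergy_le_div_mul {m M p q : ℝ} (hm : 0 < m) (hmp : m ≤ p) (hpM : p ≤ M)
    (hmq : m ≤ q) (hqM : q ≤ M) (l a b : ℝ) :
    weightedEnergy p l a b ≤ M / m * weightedEnergy q l a b := by
  have hp : 0 < p := hm.trans_le hmp
  have hq : 0 < q := hm.trans_le hmq
  have h1 : b ^ 2 / p ≤ M / m * (b ^ 2 / q) := by
    rw [div_mul_div_comm, div_le_div_iff₀ hp (by positivity)]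
    nlinarith [sq_nonneg b, mul_le_mul hqM hmp hm.le (hm.le.trans (hmp.trans hpM))]
  have h2 : l ^ 2 * p * a ^ 2 ≤ M / m * (l ^ 2 * q * a ^ 2) := by
    rw [div_mul_eq_mul_div, le_div_iff₀ hm]
    nlinarith [sq_nonneg (l * a), mul_le_mul hpM hmq hm.le (hm.le.trans (hmp.trans hpM))]
  unfold weightedEnergy
  linarith

theorem hasDerivAt_kowE {c u u' : ℝ → ℝ} {cinf lam x : ℝ} (hcinf : 0 < cinf)
    (hu : HasDerivAt u (u' x) x) (hu' : HasDerivAt u' (-(lam ^ 2 * c x * u x)) x) :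
    HasDerivAt (kowE cinf lam u u') (lam ^ 2 * (cinf - c x) / √cinf * (2 * (u x * u' x))) x := by
  have hsq : √cinf ^ 2 = cinf := sq_sqrt hcinf.le
  have hne : √cinf ≠ 0 := (sqrt_pos.mpr hcinf).ne'
  refine (((hu'.pow 2).div_const √cinf).add ((hu.pow 2).const_mul (lam ^ 2 * √cinf))).congr_deriv ?_
  field_simp
  linear_combination 2 * lam ^ 2 * u x * u' x * hsq

theorem kowE_le_mul_exp_integral {t0 cinf lam s b : ℝ} {c u u' : ℝ → ℝ}
    (hcinf : 0 < cinf) (hlam : 0 ≤ lam) (hc : ContinuousOn c (Ici t0))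
    (hu : ∀ t ∈ Ici t0, HasDerivWithinAt u (u' t) (Ici t0) t)
    (hu' : ∀ t ∈ Ici t0, HasDerivWithinAt u' (-(lam ^ 2 * c t * u t)) (Ici t0) t)
    (hs : t0 ≤ s) (hsb : s ≤ b) :
    kowE cinf lam u u' b ≤
      kowE cinf lam u u' s * exp (lam / √cinf * ∫ τ in s..b, |c τ - cinf|) := by
  have hsub : Icc s b ⊆ Ici t0 := fun x hx => hs.trans hx.1
  have hIoo : ∀ x ∈ Ioo s b, t0 < x := fun x hx => hs.trans_lt hx.1
  have hg : ContinuousOn (fun τ => |c τ - cinf|) (Ici t0) := (hc.sub continuousOn_const).abs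
  have hE : ContinuousOn (kowE cinf lam u u') (Icc s b) := by
    have huc : ContinuousOn u (Ici t0) := fun t ht => (hu t ht).continuousWithinAt
    have hu'c : ContinuousOn u' (Ici t0) := fun t ht => (hu' t ht).continuousWithinAt
    exact (((hu'c.pow 2).div_const _).add (continuousOn_const.mul (huc.pow 2))).mono hsub
  have hΦ : ContinuousOn (fun x => lam / √cinf * ∫ τ in s..x, |c τ - cinf|) (Icc s b) := by
    refine continuousOn_const.mul ?_
    have hint : IntegrableOn (fun τ => |c τ - cinf|) (uIcc s b) := by
      rw [uIcc_of_le hsb]; exact (hg.mono hsub).integrableOn_Icc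
    simpa [uIcc_of_le hsb] using intervalIntegral.continuousOn_primitive_interval hint
  refine le_mul_exp_sub_of_hasDerivAt_le_mul (φ := fun x => lam / √cinf * |c x - cinf|) hsb hE hΦ
    (fun x hx => hasDerivAt_kowE hcinf ((hu x (hIoo x hx).le).hasDerivAt (Ici_mem_nhds (hIoo x hx)))
      ((hu' x (hIoo x hx).le).hasDerivAt (Ici_mem_nhds (hIoo x hx))))
    (fun x hx => ?_) (fun x hx => ?_) |>.trans_eq (by simp)
  · refine (intervalIntegral.integral_hasDerivAt_right ?_ ?_ ?_).const_mul _
    · exact (hg.mono (fun y hy => hs.trans hy.1)).intervalIntegrable_of_Icc hx.1.le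
    · exact (hg.mono Ioi_subset_Ici_self).stronglyMeasurableAtFilter isOpen_Ioi x (hIoo x hx)
    · exact (hg x (hIoo x hx).le).continuousAt (Ici_mem_nhds (hIoo x hx))
  · have hAM := two_mul_abs_mul_le_weightedEnergy (sqrt_pos.mpr hcinf) lam (u x) (u' x)
    have hdiff : (cinf - c x) * (u x * u' x) ≤ |c x - cinf| * |u x * u' x| := by
      rw [abs_sub_comm, ← abs_mul]; exact le_abs_self _
    calc lam ^ 2 * (cinf - c x) / √cinf * (2 * (u x * u' x))
        = 2 * lam ^ 2 / √cinf * ((cinf - c x) * (u x * u' x)) := by ring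
      _ ≤ 2 * lam ^ 2 / √cinf * (|c x - cinf| * |u x * u' x|) := by gcongr
      _ = lam / √cinf * |c x - cinf| * (2 * lam * |u x * u' x|) := by ring
      _ ≤ lam / √cinf * |c x - cinf| * kowE cinf lam u u' x := by gcongr; exact hAM

theorem kowE_le_mul_exp_of_integral_le {t0 Λ1 cinf lam s b : ℝ} {c u u' S : ℝ → ℝ}
    (hΛ1 : 0 < Λ1) (hcinf : Λ1 ≤ cinf) (hlam : 0 ≤ lam) (hc : ContinuousOn c (Ici t0))
    (hstab : ∀ t ∈ Ici t0, ∀ b ≥ t, (∫ τ in t..b, |c τ - cinf|) ≤ S t)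
    (hu : ∀ t ∈ Ici t0, HasDerivWithinAt u (u' t) (Ici t0) t)
    (hu' : ∀ t ∈ Ici t0, HasDerivWithinAt u' (-(lam ^ 2 * c t * u t)) (Ici t0) t)
    (hs : t0 ≤ s) (hsb : s ≤ b) :
    kowE cinf lam u u' b ≤ kowE cinf lam u u' s * exp (lam * S s / √Λ1) := by
  have hE := kowE_nonneg (hΛ1.trans_le hcinf) lam u u' s
  have hI : 0 ≤ ∫ τ in s..b, |c τ - cinf| :=
    intervalIntegral.integral_nonneg hsb fun _ _ => abs_nonneg _
  refine (kowE_le_mul_exp_integral (hΛ1.trans_le hcinf) hlam hc hu hu' hs hsb).trans ?_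
  gcongr
  calc lam / √cinf * ∫ τ in s..b, |c τ - cinf|
      ≤ lam / √Λ1 * ∫ τ in s..b, |c τ - cinf| := by gcongr
    _ ≤ lam / √Λ1 * S s := by gcongr; exact hstab s hs b hsb
    _ = lam * S s / √Λ1 := by ring

/-- The correction term cancels the part of the derivative that is linear in `c'`; what remains
(`hasDerivAt_hyperbolicEnergy`) is of size `γ²`, small against `λ` times the energy. -/
noncomputable def hyperbolicEnergy (c c' u u' : ℝ → ℝ) (lam t : ℝ) : ℝ :=
  weightedEnergy (√(c t)) lam (u t) (u' t) + c' t / (2 * c t * √(c t)) * (u t * u' t)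

theorem hasDerivAt_hyperbolicEnergy {c c' c'' u u' : ℝ → ℝ} {lam x : ℝ} (hcx : 0 < c x)
    (hc : HasDerivAt c (c' x) x) (hc' : HasDerivAt c' (c'' x) x)
    (hu : HasDerivAt u (u' x) x) (hu' : HasDerivAt u' (-(lam ^ 2 * c x * u x)) x) :
    HasDerivAt (hyperbolicEnergy c c' u u' lam)
      ((c'' x / (2 * c x * √(c x)) - 3 * c' x ^ 2 / (4 * c x ^ 2 * √(c x))) * (u x * u' x)) x := by
  have hq : 0 < √(c x) := sqrt_pos.mpr hcx
  have hsq : √(c x) ^ 2 = c x := sq_sqrt hcx.le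
  have hsqrt : HasDerivAt (fun t => √(c t)) (c' x / (2 * √(c x))) x := hc.sqrt hcx.ne'
  have hden := (hc.const_mul 2).mul hsqrt
  refine ((((hu'.pow 2).div hsqrt hq.ne').add ((hsqrt.const_mul (lam ^ 2)).mul (hu.pow 2))).add
    ((hc'.div hden (show 2 * c x * √(c x) ≠ 0 by positivity)).mul (hu.mul hu'))).congr_deriv ?_
  simp only [Pi.mul_apply, Pi.div_apply, Pi.pow_apply]
  set q := √(c x)
  rw [← hsq]
  field_simp
  ring

theorem continuousOn_hyperbolicEnergy {s : Set ℝ} {c c' u u' : ℝ → ℝ} {lam : ℝ}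
    (hc : ContinuousOn c s) (hc' : ContinuousOn c' s) (hu : ContinuousOn u s)
    (hu' : ContinuousOn u' s) (hpos : ∀ t ∈ s, 0 < c t) :
    ContinuousOn (hyperbolicEnergy c c' u u' lam) s := by
  have hsq : ContinuousOn (fun t => √(c t)) s := hc.sqrt
  refine (((hu'.pow 2).div hsq fun t ht => (sqrt_pos.mpr (hpos t ht)).ne').add
    ((continuousOn_const.mul hsq).mul (hu.pow 2))).add
    ((hc'.div ((continuousOn_const.mul hc).mul hsq) fun t ht => ?_).mul (hu.mul hu'))
  have := hpos t ht
  show 2 * c t * √(c t) ≠ 0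
  positivity

theorem abs_div_two_mul_mul_sqrt_le {Λ c c' g : ℝ} (hΛ : 0 < Λ) (hc : Λ ≤ c) (hc' : |c'| ≤ g) :
    |c' / (2 * c * √c)| ≤ g / (2 * Λ * √Λ) := by
  have hc0 : 0 < c := hΛ.trans_le hc
  rw [abs_div, abs_of_pos (by positivity : 0 < 2 * c * √c)]
  gcongr
  exact (abs_nonneg _).trans hc'

theorem abs_hyperbolicEnergy_deriv_coeff_le {Λ c c' c'' g : ℝ} (hΛ : 0 < Λ) (hc : Λ ≤ c)
    (hc' : |c'| ≤ g) (hc'' : |c''| ≤ g ^ 2) :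
    |c'' / (2 * c * √c) - 3 * c' ^ 2 / (4 * c ^ 2 * √c)| ≤
      (2 * Λ + 3) / (4 * Λ ^ 2 * √Λ) * g ^ 2 := by
  have hc0 : 0 < c := hΛ.trans_le hc
  have h1 : |c'' / (2 * c * √c)| ≤ g ^ 2 / (2 * Λ * √Λ) :=
    abs_div_two_mul_mul_sqrt_le hΛ hc hc''
  have h2 : |3 * c' ^ 2 / (4 * c ^ 2 * √c)| ≤ 3 * g ^ 2 / (4 * Λ ^ 2 * √Λ) := by
    rw [abs_div, abs_of_pos (by positivity : 0 < 4 * c ^ 2 * √c), abs_mul, abs_pow,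
      abs_of_pos (by norm_num : (0 : ℝ) < 3)]
    gcongr
  calc _ ≤ |c'' / (2 * c * √c)| + |3 * c' ^ 2 / (4 * c ^ 2 * √c)| := abs_sub _ _
    _ ≤ g ^ 2 / (2 * Λ * √Λ) + 3 * g ^ 2 / (4 * Λ ^ 2 * √Λ) := add_le_add h1 h2
    _ = (2 * Λ + 3) / (4 * Λ ^ 2 * √Λ) * g ^ 2 := by field_simp; ring

theorem abs_hyperbolicEnergy_sub_le {Λ lam t g : ℝ} {c c' u u' : ℝ → ℝ} (hΛ : 0 < Λ)
    (hc : Λ ≤ c t) (hc' : |c' t| ≤ g) (hlam : g / (2 * Λ * √Λ) ≤ lam) :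
    |hyperbolicEnergy c c' u u' lam t - weightedEnergy (√(c t)) lam (u t) (u' t)| ≤
      weightedEnergy (√(c t)) lam (u t) (u' t) / 2 := by
  rw [hyperbolicEnergy, add_sub_cancel_left]
  exact abs_mul_mul_le_weightedEnergy (sqrt_pos.mpr (hΛ.trans_le hc))
    ((abs_div_two_mul_mul_sqrt_le hΛ hc hc').trans hlam) _ _

theorem hyperbolicEnergy_le_mul_exp {t0 Λ1 lam b : ℝ} {c c' c'' u u' γ Φ : ℝ → ℝ}
    (hΛ1 : 0 < Λ1) (hlam : 0 < lam)
    (hc : ∀ t ∈ Ici t0, HasDerivWithinAt c (c' t) (Ici t0) t)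
    (hc' : ∀ t ∈ Ici t0, HasDerivWithinAt c' (c'' t) (Ici t0) t)
    (hcb : ∀ t ∈ Ici t0, Λ1 ≤ c t)
    (hγ : ∀ t ∈ Ici t0, |c' t| ≤ γ t ∧ |c'' t| ≤ γ t ^ 2)
    (hu : ∀ t ∈ Ici t0, HasDerivWithinAt u (u' t) (Ici t0) t)
    (hu' : ∀ t ∈ Ici t0, HasDerivWithinAt u' (-(lam ^ 2 * c t * u t)) (Ici t0) t)
    (hb : t0 ≤ b) (hγlam : ∀ t ∈ Icc t0 b, γ t / (2 * Λ1 * √Λ1) ≤ lam)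
    (hΦ : ContinuousOn Φ (Icc t0 b)) (hΦ' : ∀ t ∈ Ioo t0 b, HasDerivAt Φ (γ t ^ 2) t) :
    hyperbolicEnergy c c' u u' lam b ≤ hyperbolicEnergy c c' u u' lam t0 *
      exp ((2 * Λ1 + 3) / (4 * Λ1 ^ 2 * √Λ1) / lam * (Φ b - Φ t0)) := by
  set K := (2 * Λ1 + 3) / (4 * Λ1 ^ 2 * √Λ1)
  have hsub : Icc t0 b ⊆ Ici t0 := fun x hx => hx.1
  have hcpos : ∀ t ∈ Ici t0, 0 < c t := fun t ht => hΛ1.trans_le (hcb t ht)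
  have hF : ContinuousOn (hyperbolicEnergy c c' u u' lam) (Icc t0 b) :=
    (continuousOn_hyperbolicEnergy (fun t ht => (hc t ht).continuousWithinAt)
      (fun t ht => (hc' t ht).continuousWithinAt) (fun t ht => (hu t ht).continuousWithinAt)
      (fun t ht => (hu' t ht).continuousWithinAt) hcpos).mono hsub
  have hΨ : ContinuousOn (fun t => K / lam * Φ t) (Icc t0 b) := continuousOn_const.mul hΦ
  refine (le_mul_exp_sub_of_hasDerivAt_le_mul hb hF hΨ (φ := fun t => K / lam * γ t ^ 2)
    (f' := fun t => (c'' t / (2 * c t * √(c t)) - 3 * c' t ^ 2 / (4 * c t ^ 2 * √(c t))) *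
      (u t * u' t))
    (fun x hx => ?_) (fun x hx => (hΦ' x hx).const_mul _) (fun x hx => ?_)).trans_eq
    (by rw [mul_sub])
  · have hnhds : Ici t0 ∈ nhds x := Ici_mem_nhds hx.1
    exact hasDerivAt_hyperbolicEnergy (hcpos x hx.1.le) ((hc x hx.1.le).hasDerivAt hnhds)
      ((hc' x hx.1.le).hasDerivAt hnhds) ((hu x hx.1.le).hasDerivAt hnhds)
      ((hu' x hx.1.le).hasDerivAt hnhds)
  · have hx' : x ∈ Ici t0 := hx.1.le
    have hρ := abs_hyperbolicEnergy_deriv_coeff_le hΛ1 (hcb x hx') (hγ x hx').1 (hγ x hx').2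
    have hAM := two_mul_abs_mul_le_weightedEnergy (sqrt_pos.mpr (hcpos x hx')) lam (u x) (u' x)
    have hclose := abs_le.mp (abs_hyperbolicEnergy_sub_le (u := u) (u' := u') hΛ1 (hcb x hx')
      (hγ x hx').1 (hγlam x ⟨hx', hx.2.le⟩))
    have huu : |u x * u' x| ≤ hyperbolicEnergy c c' u u' lam x / lam := by
      rw [le_div_iff₀ hlam]; linarith
    calc _ ≤ |c'' x / (2 * c x * √(c x)) - 3 * c' x ^ 2 / (4 * c x ^ 2 * √(c x))| *
          |u x * u' x| := by rw [← abs_mul]; exact le_abs_self _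
      _ ≤ K * γ x ^ 2 * (hyperbolicEnergy c c' u u' lam x / lam) := by gcongr
      _ = K / lam * γ x ^ 2 * hyperbolicEnergy c c' u u' lam x := by ring

theorem kowE_le_mul_exp_of_hyperbolic {t0 Λ1 Λ2 cinf lam b : ℝ} {c c' c'' u u' γ Φ : ℝ → ℝ}
    (hΛ1 : 0 < Λ1) (hlam : 0 < lam)
    (hc : ∀ t ∈ Ici t0, HasDerivWithinAt c (c' t) (Ici t0) t)
    (hc' : ∀ t ∈ Ici t0, HasDerivWithinAt c' (c'' t) (Ici t0) t)
    (hcb : ∀ t ∈ Ici t0, Λ1 ≤ c t ∧ c t ≤ Λ2) (hcinf : cinf ∈ Icc Λ1 Λ2)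
    (hγ : ∀ t ∈ Ici t0, |c' t| ≤ γ t ∧ |c'' t| ≤ γ t ^ 2)
    (hu : ∀ t ∈ Ici t0, HasDerivWithinAt u (u' t) (Ici t0) t)
    (hu' : ∀ t ∈ Ici t0, HasDerivWithinAt u' (-(lam ^ 2 * c t * u t)) (Ici t0) t)
    (hb : t0 ≤ b) (hγlam : ∀ t ∈ Icc t0 b, γ t / (2 * Λ1 * √Λ1) ≤ lam)
    (hΦ : ContinuousOn Φ (Icc t0 b)) (hΦ' : ∀ t ∈ Ioo t0 b, HasDerivAt Φ (γ t ^ 2) t) :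
    kowE cinf lam u u' b ≤ 3 * (Λ2 / Λ1) * kowE cinf lam u u' t0 *
      exp ((2 * Λ1 + 3) / (4 * Λ1 ^ 2 * √Λ1) / lam * (Φ b - Φ t0)) := by
  set X := exp ((2 * Λ1 + 3) / (4 * Λ1 ^ 2 * √Λ1) / lam * (Φ b - Φ t0))
  set E := fun t => weightedEnergy (√(c t)) lam (u t) (u' t)
  have hs1 : 0 < √Λ1 := sqrt_pos.mpr hΛ1
  have hsc : ∀ t ∈ Ici t0, √Λ1 ≤ √(c t) ∧ √(c t) ≤ √Λ2 := fun t ht =>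
    ⟨sqrt_le_sqrt (hcb t ht).1, sqrt_le_sqrt (hcb t ht).2⟩
  have hscinf : √Λ1 ≤ √cinf ∧ √cinf ≤ √Λ2 := ⟨sqrt_le_sqrt hcinf.1, sqrt_le_sqrt hcinf.2⟩
  have hclose : ∀ t ∈ Icc t0 b, |hyperbolicEnergy c c' u u' lam t - E t| ≤ E t / 2 :=
    fun t ht => abs_hyperbolicEnergy_sub_le hΛ1 (hcb t ht.1).1 (hγ t ht.1).1 (hγlam t ht)
  have hb' := abs_le.mp (hclose b ⟨hb, le_rfl⟩)
  have ht0' := abs_le.mp (hclose t0 ⟨le_rfl, hb⟩)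
  have hF := hyperbolicEnergy_le_mul_exp hΛ1 hlam hc hc' (fun t ht => (hcb t ht).1) hγ hu hu'
    hb hγlam hΦ hΦ'
  have hratio : 0 ≤ √Λ2 / √Λ1 := by positivity
  calc kowE cinf lam u u' b ≤ √Λ2 / √Λ1 * E b :=
        weightedEnergy_le_div_mul hs1 hscinf.1 hscinf.2 (hsc b hb).1 (hsc b hb).2 _ _ _
    _ ≤ √Λ2 / √Λ1 * (2 * (3 / 2 * E t0 * X)) := by
        gcongr
        nlinarith [exp_pos ((2 * Λ1 + 3) / (4 * Λ1 ^ 2 * √Λ1) / lam * (Φ b - Φ t0))]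
    _ ≤ √Λ2 / √Λ1 * (2 * (3 / 2 * (√Λ2 / √Λ1 * kowE cinf lam u u' t0) * X)) := by
        gcongr
        exact weightedEnergy_le_div_mul hs1 (hsc t0 self_mem_Ici).1 (hsc t0 self_mem_Ici).2 hscinf.1
          hscinf.2 _ _ _
    _ = 3 * (√Λ2 / √Λ1) ^ 2 * kowE cinf lam u u' t0 * X := by ring
    _ = 3 * (Λ2 / Λ1) * kowE cinf lam u u' t0 * X := by
        rw [div_pow, sq_sqrt hΛ1.le, sq_sqrt (hΛ1.le.trans (hcinf.1.trans hcinf.2))]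

theorem kowE_le_mul_exp_rpow_of_hyperbolic {t0 Λ1 Λ2 β cinf lam b : ℝ} {c c' c'' u u' : ℝ → ℝ}
    (ht0 : 0 < t0) (hΛ1 : 0 < Λ1) (hβ : 2 * β < 1) (hlam : 0 < lam)
    (hc : ∀ t ∈ Ici t0, HasDerivWithinAt c (c' t) (Ici t0) t)
    (hc' : ∀ t ∈ Ici t0, HasDerivWithinAt c' (c'' t) (Ici t0) t)
    (hcb : ∀ t ∈ Ici t0, Λ1 ≤ c t ∧ c t ≤ Λ2) (hcinf : cinf ∈ Icc Λ1 Λ2)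
    (hγ : ∀ t ∈ Ici t0, |c' t| ≤ t ^ (-β) ∧ |c'' t| ≤ (t ^ (-β)) ^ 2)
    (hu : ∀ t ∈ Ici t0, HasDerivWithinAt u (u' t) (Ici t0) t)
    (hu' : ∀ t ∈ Ici t0, HasDerivWithinAt u' (-(lam ^ 2 * c t * u t)) (Ici t0) t)
    (hb : t0 ≤ b) (hγlam : ∀ t ∈ Icc t0 b, t ^ (-β) / (2 * Λ1 * √Λ1) ≤ lam) :
    kowE cinf lam u u' b ≤ 3 * (Λ2 / Λ1) * kowE cinf lam u u' t0 *
      exp ((2 * Λ1 + 3) / (4 * Λ1 ^ 2 * √Λ1) / (1 - 2 * β) * b ^ (1 - 2 * β) / lam) := by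
  have hβ' : 0 < 1 - 2 * β := by linarith
  have hΦ' : ∀ t ∈ Ioo t0 b, HasDerivAt (fun t => t ^ (1 - 2 * β) / (1 - 2 * β))
      ((t ^ (-β)) ^ 2) t := by
    intro t ht
    have ht' : 0 < t := ht0.trans ht.1
    refine ((hasDerivAt_rpow_const (Or.inl ht'.ne')).div_const _).congr_deriv ?_
    rw [← rpow_natCast, ← rpow_mul ht'.le]
    field_simp
    ring_nf
  have hΦ : ContinuousOn (fun t => t ^ (1 - 2 * β) / (1 - 2 * β)) (Icc t0 b) :=
    fun t ht => ((continuousAt_rpow_const t _ (Or.inr hβ'.le)).div_const _).continuousWithinAt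
  have hE0 := kowE_nonneg (hΛ1.trans_le hcinf.1) lam u u' t0
  have hΛ : 0 ≤ Λ2 / Λ1 := div_nonneg (hΛ1.le.trans (hcinf.1.trans hcinf.2)) hΛ1.le
  refine (kowE_le_mul_exp_of_hyperbolic hΛ1 hlam hc hc' hcb hcinf hγ hu hu' hb hγlam hΦ
    hΦ').trans (mul_le_mul_of_nonneg_left (exp_le_exp.mpr ?_) (by positivity))
  have : 0 ≤ t0 ^ (1 - 2 * β) / (1 - 2 * β) := div_nonneg (rpow_nonneg ht0.le _) hβ'.le
  calc _ ≤ (2 * Λ1 + 3) / (4 * Λ1 ^ 2 * √Λ1) / lam * (b ^ (1 - 2 * β) / (1 - 2 * β)) := by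
        gcongr; linarith
    _ = _ := by ring

theorem rpow_le_max_of_mem_Icc {a b x : ℝ} (ha : 0 < a) (hx : x ∈ Icc a b) (p : ℝ) :
    x ^ p ≤ max (a ^ p) (b ^ p) := by
  rcases le_total 0 p with hp | hp
  · exact (rpow_le_rpow (ha.le.trans hx.1) hx.2 hp).trans (le_max_right _ _)
  · exact (rpow_le_rpow_of_nonpos ha hx.1 hp).trans (le_max_left _ _)

theorem exists_switchTime {t0 K β δ : ℝ} (ht0 : 0 < t0) (hK : 0 < K) (hδ : 0 < δ)
    (hδβ : 0 < δ + β) :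
    ∃ lam0, ∀ lam, lam0 ≤ lam → ∃ s, t0 ≤ s ∧ s ^ δ = lam ∧ ∀ x ∈ Icc t0 s, x ^ (-β) / K ≤ lam := by
  set M := K⁻¹ ^ (δ + β)⁻¹
  refine ⟨max (max t0 M ^ δ) (t0 ^ (-β) / K), fun lam hlam => ⟨lam ^ δ⁻¹, ?_⟩⟩
  have hm : 0 < max t0 M := ht0.trans_le (le_max_left _ _)
  have hlam0 : 0 ≤ lam := (rpow_pos_of_pos hm δ).le.trans ((le_max_left _ _).trans hlam)
  have hs : max t0 M ≤ lam ^ δ⁻¹ :=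
    (le_rpow_inv_iff_of_pos hm.le hlam0 hδ).mpr ((le_max_left _ _).trans hlam)
  have hsδ : (lam ^ δ⁻¹) ^ δ = lam := rpow_inv_rpow hlam0 hδ.ne'
  refine ⟨(le_max_left _ _).trans hs, hsδ, fun x hx => ?_⟩
  rw [div_le_iff₀ hK]
  refine (rpow_le_max_of_mem_Icc ht0 hx _).trans (max_le ?_ ?_)
  · rw [← div_le_iff₀ hK]; exact (le_max_right _ _).trans hlam
  · set s := lam ^ δ⁻¹
    have hspos : 0 < s := hm.trans_le hs
    have hKs : K⁻¹ ≤ s ^ (δ + β) := by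
      rw [← rpow_inv_rpow (inv_pos.mpr hK).le hδβ.ne']
      exact rpow_le_rpow (rpow_nonneg (inv_pos.mpr hK).le _) ((le_max_right _ _).trans hs) hδβ.le
    calc s ^ (-β) = K * K⁻¹ * s ^ (-β) := by rw [mul_inv_cancel₀ hK.ne', one_mul]
      _ ≤ K * s ^ (δ + β) * s ^ (-β) := by gcongr
      _ = lam * K := by rw [mul_assoc, ← rpow_add hspos, add_neg_cancel_right, hsδ, mul_comm]

theorem le_mul_exp_rpow_of_two_phase {E : ℝ → ℝ} {t0 s lam α β a B C t : ℝ}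
    (ht0 : 0 < t0) (hθ : 2 * β < 1 + α) (hδ : 2 * β + α < 1) (ha : 0 < a) (hB : 0 ≤ B)
    (hCE : 0 ≤ C * E t0) (hs : t0 ≤ s) (hslam : s ^ ((1 - 2 * β - α) / 2) = lam)
    (hH : ∀ b ∈ Icc t0 s, E b ≤ C * E t0 * exp (B * b ^ (1 - 2 * β) / lam))
    (hK : ∀ b ≥ s, E b ≤ E s * exp (lam * s ^ α / a)) (ht : t0 ≤ t) :
    E t ≤ C * E t0 * exp ((B + 1 / a) * t ^ ((α + 1) / 2 - β)) := by
  have hθ0 : 0 < (α + 1) / 2 - β := by linarith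
  have hδ0 : 0 < (1 - 2 * β - α) / 2 := by linarith
  set θ := (α + 1) / 2 - β
  set δ := (1 - 2 * β - α) / 2
  have hspos : 0 < s := ht0.trans_le hs
  have hlam : 0 < lam := hslam ▸ rpow_pos_of_pos hspos δ
  have hhyp : ∀ r ∈ Icc t0 s, E r ≤ C * E t0 * exp (B * r ^ θ) := by
    intro r hr
    have hr0 : 0 < r := ht0.trans_le hr.1
    refine (hH r hr).trans (mul_le_mul_of_nonneg_left (exp_le_exp.mpr ?_) hCE)
    rw [mul_div_assoc]
    gcongr
    rw [div_le_iff₀ hlam, show 1 - 2 * β = θ + δ by ring, rpow_add hr0, ← hslam]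
    gcongr
    exact hr.2
  rcases le_total t s with hts | hst
  · refine (hhyp t ⟨ht, hts⟩).trans (mul_le_mul_of_nonneg_left (exp_le_exp.mpr ?_) hCE)
    exact mul_le_mul_of_nonneg_right (le_add_of_nonneg_right (by positivity))
      (rpow_nonneg (ht0.le.trans ht) θ)
  · have hlamα : lam * s ^ α = s ^ θ := by
      rw [← hslam, ← rpow_add hspos]
      congr 1
      simp only [δ, θ]
      ring
    calc E t ≤ E s * exp (lam * s ^ α / a) := hK t hst
      _ ≤ C * E t0 * exp (B * s ^ θ) * exp (lam * s ^ α / a) :=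
          mul_le_mul_of_nonneg_right (hhyp s ⟨hs, le_rfl⟩) (exp_pos _).le
      _ = C * E t0 * exp ((B + 1 / a) * s ^ θ) := by
          rw [mul_assoc, ← exp_add, hlamα]; ring_nf
      _ ≤ C * E t0 * exp ((B + 1 / a) * t ^ θ) := by gcongr

theorem le_mul_exp_rpow_of_frequency_split {E : ℝ → ℝ} {t0 lam lam0 α β a B C t : ℝ}
    (ht0 : 0 < t0) (hθ : 2 * β < 1 + α) (hδ : 2 * β + α < 1) (ha : 0 < a) (hB : 0 ≤ B)
    (hC : 0 ≤ C) (hE : 0 ≤ E t0) (hK : ∀ s ≥ t0, ∀ b ≥ s, E b ≤ E s * exp (lam * s ^ α / a))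
    (hH : lam0 < lam → ∃ s, t0 ≤ s ∧ s ^ ((1 - 2 * β - α) / 2) = lam ∧
      ∀ b ∈ Icc t0 s, E b ≤ C * E t0 * exp (B * b ^ (1 - 2 * β) / lam)) (ht : t0 ≤ t) :
    E t ≤ E t0 * (C + exp (lam0 * t0 ^ α / a)) * exp ((B + 1 / a) * t ^ ((α + 1) / 2 - β)) := by
  have hexp : 1 ≤ exp ((B + 1 / a) * t ^ ((α + 1) / 2 - β)) :=
    one_le_exp (mul_nonneg (by positivity) (rpow_nonneg (ht0.le.trans ht) _))
  rcases le_or_gt lam lam0 with hsmall | hlarge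
  · calc E t ≤ E t0 * exp (lam * t0 ^ α / a) := hK t0 le_rfl t ht
      _ ≤ E t0 * (C + exp (lam0 * t0 ^ α / a)) := by
          refine mul_le_mul_of_nonneg_left ((exp_le_exp.mpr ?_).trans
            (le_add_of_nonneg_left hC)) hE
          gcongr
      _ ≤ _ := le_mul_of_one_le_right (by positivity) hexp
  · obtain ⟨s, hs, hslam, hhyp⟩ := hH hlarge
    refine (le_mul_exp_rpow_of_two_phase ht0 hθ hδ ha hB (mul_nonneg hC hE) hs hslam hhyp
      (hK s hs) ht).trans ?_
    rw [mul_comm C]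
    gcongr
    exact le_add_of_nonneg_right (exp_pos _).le

theorem energy_growth_powers_case_general
    (t0 Λ1 Λ2 α β : ℝ) (ht0 : 0 < t0) (hΛ1 : 0 < Λ1)
    (hα : α < 0) (hβ : 2 * β < 1 + α) :
    ∃ H6 H7 : ℝ,
      ∀ (c c' c'' : ℝ → ℝ) (cinf : ℝ),
        (∀ t ∈ Ici t0, HasDerivWithinAt c (c' t) (Ici t0) t) →
        (∀ t ∈ Ici t0, HasDerivWithinAt c' (c'' t) (Ici t0) t) →
        ContinuousOn c'' (Ici t0) →
        (∀ t ∈ Ici t0, Λ1 ≤ c t ∧ c t ≤ Λ2) →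
        cinf ∈ Icc Λ1 Λ2 →
        (∀ t ∈ Ici t0, ∀ b ≥ t, (∫ τ in t..b, |c τ - cinf|) ≤ t ^ α) →
        (∀ t ∈ Ici t0, |c' t| ≤ t ^ (-β) ∧ |c'' t| ≤ (t ^ (-β)) ^ 2) →
        ∀ lam : ℝ, 0 < lam →
        ∀ u u' : ℝ → ℝ,
          (∀ t ∈ Ici t0, HasDerivWithinAt u (u' t) (Ici t0) t) →
          (∀ t ∈ Ici t0, HasDerivWithinAt u' (-(lam ^ 2 * c t * u t)) (Ici t0) t) →
          ∀ t ∈ Ici t0,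
            kowE cinf lam u u' t ≤
              kowE cinf lam u u' t0 * H6 *
                Real.exp (H7 * t ^ ((α + 1) / 2 - β)) := by
  obtain ⟨lam0, hlam0⟩ := exists_switchTime (K := 2 * Λ1 * √Λ1) (β := β)
    (δ := (1 - 2 * β - α) / 2) ht0 (by positivity) (by linarith) (by linarith)
  refine ⟨3 * (Λ2 / Λ1) + exp (lam0 * t0 ^ α / √Λ1),
    (2 * Λ1 + 3) / (4 * Λ1 ^ 2 * √Λ1) / (1 - 2 * β) + 1 / √Λ1, ?_⟩
  intro c c' c'' cinf hc hc' _ hcb hcinf hstab hγ lam hlam u u' hu hu' t ht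
  have hβ' : 0 < 1 - 2 * β := by linarith
  have hΛ2 : 0 < Λ2 := hΛ1.trans_le (hcinf.1.trans hcinf.2)
  refine le_mul_exp_rpow_of_frequency_split ht0 hβ (by linarith) (sqrt_pos.mpr hΛ1)
    (by positivity) (by positivity) (kowE_nonneg (hΛ1.trans_le hcinf.1) lam u u' t0)
    (fun s hs b hsb => kowE_le_mul_exp_of_integral_le hΛ1 hcinf.1 hlam.le
      (fun t ht => (hc t ht).continuousWithinAt) hstab hu hu' hs hsb) (fun hlarge => ?_) ht
  obtain ⟨s, hs, hslam, hcond⟩ := hlam0 lam hlarge.le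
  exact ⟨s, hs, hslam, fun b hb => kowE_le_mul_exp_rpow_of_hyperbolic ht0 hΛ1 (by linarith) hlam
    hc hc' hcb hcinf hγ hu hu' hb.1 fun x hx => hcond x ⟨hx.1, hx.2.trans hb.2⟩⟩

theorem energy_growth_powers_case
    (t0 Λ1 Λ2 α β : ℝ) (ht0 : 0 < t0) (hΛ1 : 0 < Λ1) (hΛ12 : Λ1 ≤ Λ2)
    (hα : α < 0) (hβ : 2 * β < 1 + α) :
    ∃ H6 H7 : ℝ,
      ∀ (c c' c'' : ℝ → ℝ) (cinf : ℝ),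
        (∀ t ∈ Ici t0, HasDerivWithinAt c (c' t) (Ici t0) t) →
        (∀ t ∈ Ici t0, HasDerivWithinAt c' (c'' t) (Ici t0) t) →
        ContinuousOn c'' (Ici t0) →
        (∀ t ∈ Ici t0, Λ1 ≤ c t ∧ c t ≤ Λ2) →
        cinf ∈ Icc Λ1 Λ2 →
        (∀ t ∈ Ici t0, ∀ b ≥ t, (∫ τ in t..b, |c τ - cinf|) ≤ t ^ α) →
        (∀ t ∈ Ici t0, |c' t| ≤ t ^ (-β) ∧ |c'' t| ≤ (t ^ (-β)) ^ 2) →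
        ∀ lam : ℝ, 0 < lam →
        ∀ u u' : ℝ → ℝ,
          (∀ t ∈ Ici t0, HasDerivWithinAt u (u' t) (Ici t0) t) →
          (∀ t ∈ Ici t0, HasDerivWithinAt u' (-(lam ^ 2 * c t * u t)) (Ici t0) t) →
          ∀ t ∈ Ici t0,
            kowE cinf lam u u' t ≤
              kowE cinf lam u u' t0 * H6 *
                Real.exp (H7 * t ^ ((α + 1) / 2 - β)) :=
  energy_growth_powers_case_general t0 Λ1 Λ2 α β ht0 hΛ1 hα hβ
end

section
/- (Kowaleskian estimate.) Let c : [a,b] → ℝ be continuous with c(t) ≥ Λ1 > 0 for all t ∈ [a,b], let c∞ ≥ Λ1 be a real number, let λ > 0, and let u : [a,b] → ℝ be a solution of u''(t) + λ² c(t) u(t) = 0. Then the Kowaleskian energy E(t) = u'(t)²/√c∞ + λ²√c∞·u(t)² satisfies E(b) ≤ E(a)·exp( (λ/Λ1^{1/2}) ∫_a^b |c(τ) − c∞| dτ ). -/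
open Real Set MeasureTheory

/-- Grönwall's inequality with a variable coefficient: `t ↦ E t * exp (-∫ₐᵗ g)` is antitone. -/
theorem le_mul_exp_integral_of_hasDerivWithinAt_le {E E' g : ℝ → ℝ} {a b : ℝ} (hab : a ≤ b)
    (hg : ContinuousOn g (Icc a b))
    (hE : ∀ t ∈ Icc a b, HasDerivWithinAt E (E' t) (Icc a b) t)
    (hE' : ∀ t ∈ Ioo a b, E' t ≤ g t * E t) :
    E b ≤ E a * exp (∫ τ in a..b, g τ) := by
  set G : ℝ → ℝ := fun t => ∫ τ in a..t, g τ
  have hG_cont : ContinuousOn G (Icc a b) := by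
    have hg_int : IntegrableOn g (uIcc a b) := by
      simpa only [uIcc_of_le hab] using hg.integrableOn_Icc
    simpa only [uIcc_of_le hab] using intervalIntegral.continuousOn_primitive_interval hg_int
  have hG_deriv : ∀ t ∈ Ioo a b, HasDerivAt G (g t) t := fun t ht =>
    intervalIntegral.integral_hasDerivAt_right
      ((hg.mono (Icc_subset_Icc le_rfl ht.2.le)).intervalIntegrable_of_Icc ht.1.le)
      ((hg.mono Ioo_subset_Icc_self).stronglyMeasurableAtFilter isOpen_Ioo t ht)
      (hg.continuousAt (Icc_mem_nhds ht.1 ht.2))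
  have hanti : AntitoneOn (fun t => E t * exp (-G t)) (Icc a b) := by
    refine antitoneOn_of_hasDerivWithinAt_nonpos (convex_Icc a b)
      ((show ContinuousOn E (Icc a b) from fun t ht => (hE t ht).continuousWithinAt).mul
        hG_cont.neg.rexp)
      (f' := fun t => (E' t - g t * E t) * exp (-G t)) (fun t ht => ?_) (fun t ht => ?_)
    · rw [interior_Icc] at ht
      refine (((hE t (Ioo_subset_Icc_self ht)).hasDerivAt (Icc_mem_nhds ht.1 ht.2)).mul
        (hG_deriv t ht).neg.exp).hasDerivWithinAt.congr_deriv ?_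
      rw [Pi.neg_apply]
      ring
    · rw [interior_Icc] at ht
      exact mul_nonpos_of_nonpos_of_nonneg (sub_nonpos.2 (hE' t ht)) (exp_pos _).le
  have hba := hanti (left_mem_Icc.2 hab) (right_mem_Icc.2 hab) hab
  simp only [G, intervalIntegral.integral_same, neg_zero, exp_zero, mul_one] at hba
  calc E b = E b * exp (-G b) * exp (G b) := by rw [mul_assoc, ← exp_add, neg_add_cancel,
        exp_zero, mul_one]
    _ ≤ E a * exp (G b) := mul_le_mul_of_nonneg_right hba (exp_pos _).le

theorem hasDerivWithinAt_kowE {cinf lam : ℝ} {u u' c : ℝ → ℝ} {s : Set ℝ} {t : ℝ}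
    (hcinf : 0 ≤ cinf) (hu : HasDerivWithinAt u (u' t) s t)
    (hu' : HasDerivWithinAt u' (-(lam ^ 2 * c t * u t)) s t) :
    HasDerivWithinAt (kowE cinf lam u u')
      (-(2 * lam ^ 2 * (u t * u' t) * (c t - cinf)) / √cinf) s t := by
  refine (((hu'.pow 2).div_const √cinf).add
    ((hu.pow 2).const_mul (lam ^ 2 * √cinf))).congr_deriv ?_
  rcases hcinf.eq_or_lt with rfl | hpos
  · simp
  · have hsq : √cinf ^ 2 = cinf := sq_sqrt hpos.le
    field_simp
    linear_combination (2 * lam ^ 2 * u t * u' t) * hsq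

theorem two_mul_abs_mul_le_kowE {cinf : ℝ} (lam : ℝ) (u u' : ℝ → ℝ) (t : ℝ) (hcinf : 0 < cinf) :
    2 * lam * |u t * u' t| ≤ kowE cinf lam u u' t := by
  have hs : 0 < √cinf := sqrt_pos.2 hcinf
  have hsq : kowE cinf lam u u' t - 2 * lam * |u t * u' t|
      = (|u' t| - lam * √cinf * |u t|) ^ 2 / √cinf := by
    unfold kowE
    field_simp
    rw [abs_mul]
    linear_combination -(sq_abs (u' t)) - (√cinf ^ 2 * lam ^ 2) * sq_abs (u t)
  linarith [div_nonneg (sq_nonneg (|u' t| - lam * √cinf * |u t|)) hs.le]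

theorem kowE_deriv_le {Λ1 cinf lam : ℝ} (u u' : ℝ → ℝ) (t d : ℝ) (hΛ1 : 0 < Λ1)
    (hcinf : Λ1 ≤ cinf) (hlam : 0 ≤ lam) :
    -(2 * lam ^ 2 * (u t * u' t) * d) / √cinf ≤ lam / √Λ1 * |d| * kowE cinf lam u u' t := by
  have hr : 0 < √Λ1 := sqrt_pos.2 hΛ1
  have hE := two_mul_abs_mul_le_kowE lam u u' t (hΛ1.trans_le hcinf)
  have hEnonneg : 0 ≤ kowE cinf lam u u' t := (by positivity : 0 ≤ 2 * lam * _).trans hE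
  calc -(2 * lam ^ 2 * (u t * u' t) * d) / √cinf
      ≤ lam / √cinf * |d| * (2 * lam * |u t * u' t|) := by
        rw [div_mul_eq_mul_div, div_mul_eq_mul_div, div_le_div_iff_of_pos_right
          (hr.trans_le (sqrt_le_sqrt hcinf))]
        refine (neg_le_abs _).trans (le_of_eq ?_)
        rw [abs_mul, abs_mul, abs_mul, abs_two, abs_of_nonneg (by positivity : 0 ≤ lam ^ 2)]
        ring
    _ ≤ lam / √Λ1 * |d| * kowE cinf lam u u' t := by
        gcongr

theorem kowaleskian_estimate_general
    (a b Λ1 cinf lam : ℝ) (hab : a ≤ b) (hΛ1 : 0 < Λ1) (hcinf : Λ1 ≤ cinf)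
    (hlam : 0 < lam)
    (c : ℝ → ℝ) (hc_cont : ContinuousOn c (Icc a b))
    (u u' : ℝ → ℝ)
    (hu : ∀ t ∈ Icc a b, HasDerivWithinAt u (u' t) (Icc a b) t)
    (hu' : ∀ t ∈ Icc a b, HasDerivWithinAt u' (-(lam ^ 2 * c t * u t)) (Icc a b) t) :
    kowE cinf lam u u' b ≤
      kowE cinf lam u u' a *
        Real.exp (lam / Real.sqrt Λ1 * ∫ τ in a..b, |c τ - cinf|) := by
  rw [← intervalIntegral.integral_const_mul]
  refine le_mul_exp_integral_of_hasDerivWithinAt_le hab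
    (continuousOn_const.mul (hc_cont.sub continuousOn_const).abs)
    (fun t ht => hasDerivWithinAt_kowE (hΛ1.le.trans hcinf) (hu t ht) (hu' t ht))
    (fun t _ => kowE_deriv_le u u' t _ hΛ1 hcinf hlam.le)

theorem kowaleskian_estimate
    (a b Λ1 cinf lam : ℝ) (hab : a ≤ b) (hΛ1 : 0 < Λ1) (hcinf : Λ1 ≤ cinf)
    (hlam : 0 < lam)
    (c : ℝ → ℝ) (hc_cont : ContinuousOn c (Icc a b))
    (hc_lb : ∀ t ∈ Icc a b, Λ1 ≤ c t)
    (u u' : ℝ → ℝ)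
    (hu : ∀ t ∈ Icc a b, HasDerivWithinAt u (u' t) (Icc a b) t)
    (hu' : ∀ t ∈ Icc a b, HasDerivWithinAt u' (-(lam ^ 2 * c t * u t)) (Icc a b) t) :
    kowE cinf lam u u' b ≤
      kowE cinf lam u u' a *
        Real.exp (lam / Real.sqrt Λ1 * ∫ τ in a..b, |c τ - cinf|) :=
  kowaleskian_estimate_general a b Λ1 cinf lam hab hΛ1 hcinf hlam c hc_cont u u' hu hu'
end
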